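/- arXiv:2112.04271 — 6 statements merged into one kernel-verified Lean document; each statement's English description precedes it below -/
import Mathlib

section
/- Let π be a permutation on {0,…,n−1}, let P = {0} ∪ {i : 0 < i ≤ n−1, π(i) ≠ π(i−1)+1}, and Q = {π(i) : i ∈ P}. For any integer d ≥ 2, there exists a set P′ with P ⊆ P′ ⊆ {0,…,n−1}, with Q′ = {π(i) : i ∈ P′}, such that: (1) for any q, q′ ∈ Q′ where q is the predecessor of q′ in Q′ (i.e., q < q′ and no element of Q′ lies strictly between them), |[q, q′) ∩ P′| < 2d; and (2) |P′| ≤ d·|P|/(d−1). -/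
/-- The index `i - 1` (natural-number subtraction) as an element of `Fin n`. -/
def finPred {n : ℕ} (i : Fin n) : Fin n :=
  ⟨i.val - 1, Nat.lt_of_le_of_lt (Nat.sub_le _ _) i.isLt⟩

/-- The set of subsequence heads of a permutation `π`:
`{0} ∪ {i : 0 < i ≤ n−1, π(i) ≠ π(i−1)+1}` (value arithmetic over ℕ). -/
def headSet {n : ℕ} (π : Equiv.Perm (Fin n)) : Finset (Fin n) :=
  Finset.univ.filter (fun i => i.val = 0 ∨ (π i).val ≠ (π (finPred i)).val + 1)

/-!
Grow the set of separators `Q'` greedily, the points being `P' = π⁻¹(Q')`. While some gap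
`[q, q')` between consecutive separators holds at least `2d` points, insert as a new separator
the point `v` of the gap with exactly `d` points of the gap below it; this adds the point `π⁻¹(v)`. The potential `∑_{q ∈ Q'} (w(q) - d)₊`,
where `w(q)` counts the points in the gap starting at `q`, is at most `|P|` initially, and each
split lowers it by at least `d - 1`: the split gap loses `d`, the new point adds at most one.
So at most `|P| / (d - 1)` points are added.
-/

open Finset

namespace GapRefinement

variable {α : Type*} [LinearOrder α]

/-- The gap of `q ∈ A` is `[q, q⁺)`, with `q⁺` the successor of `q` in `A`; it is unbounded
above when `q` is the largest element of `A`. -/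
def InGap (A : Finset α) (q x : α) : Prop := q ≤ x ∧ ∀ b ∈ A, q < b → x < b

instance (A : Finset α) (q : α) : DecidablePred (InGap A q) :=
  fun _ => inferInstanceAs (Decidable (_ ∧ _))

theorem inGap_unique {A : Finset α} {q₁ q₂ x : α} (h₁ : q₁ ∈ A) (h₂ : q₂ ∈ A)
    (hx₁ : InGap A q₁ x) (hx₂ : InGap A q₂ x) : q₁ = q₂ := by
  by_contra hne
  rcases lt_or_gt_of_ne hne with hlt | hlt
  · exact (hx₁.2 q₂ h₂ hlt).not_ge hx₂.1
  · exact (hx₂.2 q₁ h₁ hlt).not_ge hx₁.1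

theorem card_filter_inGap_le_one (A : Finset α) (x : α) : #{q ∈ A | InGap A q x} ≤ 1 :=
  card_le_one.2 fun _ h₁ _ h₂ =>
    inGap_unique (mem_filter.1 h₁).1 (mem_filter.1 h₂).1 (mem_filter.1 h₁).2 (mem_filter.1 h₂).2

theorem inGap_iff_of_consecutive {A : Finset α} {q q' x : α} (hq' : q' ∈ A) (hlt : q < q')
    (hbet : ∀ b ∈ A, ¬(q < b ∧ b < q')) : InGap A q x ↔ q ≤ x ∧ x < q' := by
  refine ⟨fun h => ⟨h.1, h.2 q' hq' hlt⟩, fun ⟨hqx, hxq'⟩ => ⟨hqx, fun b hb hqb => ?_⟩⟩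
  exact hxq'.trans_le (not_lt.1 fun hbq' => hbet b hb ⟨hqb, hbq'⟩)

theorem inGap_insert_iff {A : Finset α} {q q' v a x : α} (hq : q ∈ A) (hqv : q < v)
    (hvq' : v < q') (hbet : ∀ b ∈ A, ¬(q < b ∧ b < q')) (ha : a ∈ A) (haq : a ≠ q) :
    InGap (insert v A) a x ↔ InGap A a x := by
  simp only [InGap, forall_mem_insert]
  refine ⟨fun h => ⟨h.1, h.2.2⟩, fun h => ⟨h.1, fun hav => ?_, h.2⟩⟩
  have hlt : a < q :=
    lt_of_le_of_ne (not_lt.1 fun hqa => hbet a ha ⟨hqa, hav.trans hvq'⟩) haq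
  exact (h.2 q hq hlt).trans hqv

theorem card_filter_add_card_filter {P : Finset α} {q v q' : α} (hqv : q ≤ v) (hvq' : v ≤ q') :
    #{x ∈ P | q ≤ x ∧ x < v} + #{x ∈ P | v ≤ x ∧ x < q'} = #{x ∈ P | q ≤ x ∧ x < q'} := by
  rw [← card_union_of_disjoint (disjoint_filter.2 fun _ _ h₁ h₂ => h₁.2.not_ge h₂.1),
    ← filter_or]
  congr 1
  refine filter_congr fun x _ => ?_
  constructor
  · rintro (h | h)
    · exact ⟨h.1, h.2.trans_le hvq'⟩
    · exact ⟨hqv.trans h.1, h.2⟩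
  · intro h
    rcases lt_or_ge x v with hxv | hvx
    · exact Or.inl ⟨h.1, hxv⟩
    · exact Or.inr ⟨hvx, h.2⟩

theorem exists_mem_card_filter_lt_eq (s : Finset α) {m : ℕ} (hm : m < #s) :
    ∃ v ∈ s, #{x ∈ s | x < v} = m := by
  induction s using induction_on_max generalizing m with
  | empty => simp at hm
  | insert a t hlt ih =>
    have hat : a ∉ t := fun h => (hlt a h).false
    rw [card_insert_of_notMem hat] at hm
    rcases (Nat.lt_succ_iff.1 hm).lt_or_eq with hm | rfl
    · obtain ⟨v, hv, hcard⟩ := ih hm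
      refine ⟨v, mem_insert_of_mem hv, ?_⟩
      rwa [filter_insert, if_neg (hlt v hv).not_gt]
    · refine ⟨a, mem_insert_self a t, ?_⟩
      rw [filter_insert, if_neg (lt_irrefl a), filter_true_of_mem hlt]

def excess (d : ℕ) (A P : Finset α) : ℕ := ∑ q ∈ A, (#{x ∈ P | InGap A q x} - d)

theorem excess_le_card (d : ℕ) (A P : Finset α) : excess d A P ≤ #P :=
  calc excess d A P
      ≤ ∑ q ∈ A, #{x ∈ P | InGap A q x} := sum_le_sum fun _ _ => Nat.sub_le _ _
    _ = ∑ x ∈ P, #{q ∈ A | InGap A q x} :=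
      sum_card_bipartiteAbove_eq_sum_card_bipartiteBelow (fun q x => InGap A q x)
    _ ≤ ∑ _x ∈ P, 1 := sum_le_sum fun x _ => card_filter_inGap_le_one A x
    _ = #P := (card_eq_sum_ones P).symm

theorem excess_insert_point_le (d : ℕ) (A P : Finset α) (y : α) :
    excess d A (insert y P) ≤ excess d A P + 1 :=
  calc excess d A (insert y P)
      ≤ ∑ q ∈ A, ((#{x ∈ P | InGap A q x} - d) + if InGap A q y then 1 else 0) := by
        refine sum_le_sum fun q _ => ?_
        rw [filter_insert]
        split_ifs
        · have := card_insert_le y {x ∈ P | InGap A q x}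
          omega
        · omega
    _ = excess d A P + #{q ∈ A | InGap A q y} := by rw [sum_add_distrib, sum_boole]; rfl
    _ ≤ excess d A P + 1 := by grw [card_filter_inGap_le_one]

theorem excess_insert_add {d : ℕ} {A P : Finset α} {q q' v : α} (hq : q ∈ A) (hq' : q' ∈ A)
    (hqv : q < v) (hvq' : v < q') (hbet : ∀ b ∈ A, ¬(q < b ∧ b < q'))
    (hleft : d ≤ #{x ∈ P | q ≤ x ∧ x < v}) (hright : d ≤ #{x ∈ P | v ≤ x ∧ x < q'}) :
    excess d (insert v A) P + d = excess d A P := by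
  have hv : v ∉ A := fun hv => hbet v hv ⟨hqv, hvq'⟩
  have hbet_left : ∀ b ∈ insert v A, ¬(q < b ∧ b < v) := by
    simp only [forall_mem_insert, lt_irrefl, and_false, not_false_eq_true, true_and]
    exact fun b hb h => hbet b hb ⟨h.1, h.2.trans hvq'⟩
  have hbet_right : ∀ b ∈ insert v A, ¬(v < b ∧ b < q') := by
    simp only [forall_mem_insert, lt_irrefl, false_and, not_false_eq_true, true_and]
    exact fun b hb h => hbet b hb ⟨hqv.trans h.1, h.2⟩
  have gap_q : {x ∈ P | InGap A q x} = {x ∈ P | q ≤ x ∧ x < q'} :=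
    filter_congr fun _ _ => inGap_iff_of_consecutive hq' (hqv.trans hvq') hbet
  have gap_q_insert : {x ∈ P | InGap (insert v A) q x} = {x ∈ P | q ≤ x ∧ x < v} :=
    filter_congr fun _ _ => inGap_iff_of_consecutive (mem_insert_self v A) hqv hbet_left
  have gap_v_insert : {x ∈ P | InGap (insert v A) v x} = {x ∈ P | v ≤ x ∧ x < q'} :=
    filter_congr fun _ _ => inGap_iff_of_consecutive (mem_insert_of_mem hq') hvq' hbet_right
  have gaps_other : ∑ a ∈ A.erase q, (#{x ∈ P | InGap (insert v A) a x} - d)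
      = ∑ a ∈ A.erase q, (#{x ∈ P | InGap A a x} - d) :=
    sum_congr rfl fun a ha => by
      rw [filter_congr fun x _ =>
        inGap_insert_iff hq hqv hvq' hbet (mem_of_mem_erase ha) (ne_of_mem_erase ha)]
  have hsplit := card_filter_add_card_filter (P := P) hqv.le hvq'.le
  rw [excess, excess, sum_insert hv, ← add_sum_erase A _ hq, ← add_sum_erase A _ hq, gap_q,
    gap_q_insert, gap_v_insert, gaps_other]
  omega

section Refinement

variable (g : α → α) (d : ℕ)

def IsSparse (A : Finset α) : Prop :=
  ∀ q q' : α, q ∈ A → q' ∈ A → q < q' → (∀ x ∈ A, ¬(q < x ∧ x < q')) →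
    #{x ∈ A.image g | q ≤ x ∧ x < q'} < 2 * d

def potential (A : Finset α) : ℕ := excess d A (A.image g)

theorem potential_le_card (A : Finset α) : potential g d A ≤ #A :=
  (excess_le_card d A _).trans card_image_le

/-- Split an overfull gap at its `d`-th point: both halves keep at least `d` points, so the
excess drops by `d`, while the new point `g v` raises it by at most one. -/
theorem exists_potential_insert_add_le (hd : 1 ≤ d) {A : Finset α} (hA : ¬IsSparse g d A) :
    ∃ v ∉ A, potential g d (insert v A) + (d - 1) ≤ potential g d A := by
  simp only [IsSparse, not_forall, not_lt] at hA
  obtain ⟨q, q', hq, hq', -, hbet, hcard⟩ := hA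
  obtain ⟨v, hvS, hv⟩ :=
    exists_mem_card_filter_lt_eq {x ∈ A.image g | q ≤ x ∧ x < q'} (m := d) (by omega)
  obtain ⟨-, -, hvq'⟩ := mem_filter.1 hvS
  have hqv : q < v := by
    obtain ⟨x, hx⟩ := card_pos.1 (hv ▸ (by omega : 0 < d))
    exact (mem_filter.1 (mem_filter.1 hx).1).2.1.trans_lt (mem_filter.1 hx).2
  have hleft : #{x ∈ A.image g | q ≤ x ∧ x < v} = d := by
    rw [← hv, filter_filter]
    exact congrArg card (filter_congr fun x _ =>
      ⟨fun h => ⟨⟨h.1, h.2.trans hvq'⟩, h.2⟩, fun h => ⟨h.1.1, h.2⟩⟩)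
  have hsplit := card_filter_add_card_filter (P := A.image g) hqv.le hvq'.le
  have hdrop := excess_insert_add hq hq' hqv hvq' hbet hleft.ge (by omega)
  have hnew := excess_insert_point_le d (insert v A) (A.image g) (g v)
  refine ⟨v, fun hvA => hbet v hvA ⟨hqv, hvq'⟩, ?_⟩
  rw [potential, potential, image_insert]
  omega

theorem exists_isSparse_superset (hd : 2 ≤ d) (A : Finset α) :
    ∃ B, A ⊆ B ∧ IsSparse g d B ∧
      (d - 1) * #B + potential g d B ≤ (d - 1) * #A + potential g d A := by
  by_cases hA : IsSparse g d A
  · exact ⟨A, subset_rfl, hA, le_rfl⟩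
  obtain ⟨v, hv, hdrop⟩ := exists_potential_insert_add_le g d (by omega) hA
  obtain ⟨B, hAB, hB, hBle⟩ := exists_isSparse_superset hd (insert v A)
  refine ⟨B, (subset_insert v A).trans hAB, hB, ?_⟩
  rw [card_insert_of_notMem hv, Nat.mul_succ] at hBle
  omega
termination_by potential g d A
decreasing_by omega

theorem exists_isSparse_superset_card_le (hd : 2 ≤ d) (A : Finset α) :
    ∃ B, A ⊆ B ∧ IsSparse g d B ∧ (d - 1) * #B ≤ d * #A := by
  obtain ⟨B, hAB, hB, hBle⟩ := exists_isSparse_superset g d hd A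
  refine ⟨B, hAB, hB, ?_⟩
  have hA := potential_le_card g d A
  have : d * #A = (d - 1) * #A + #A := by
    rw [← Nat.succ_mul, Nat.succ_eq_add_one, Nat.sub_add_cancel (by omega)]
  omega

end Refinement

end GapRefinement

open GapRefinement in
theorem stmt0_general {n : ℕ} (d : ℕ) (hd : 2 ≤ d) (π : Equiv.Perm (Fin n)) :
    ∃ P' : Finset (Fin n),
      headSet π ⊆ P' ∧
      (∀ q q' : Fin n, q ∈ P'.image π → q' ∈ P'.image π → q < q' →
        (∀ x ∈ P'.image π, ¬(q < x ∧ x < q')) →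
        (P'.filter (fun x => q ≤ x ∧ x < q')).card < 2 * d) ∧
      (P'.card : ℚ) ≤ (d * (headSet π).card : ℚ) / ((d : ℚ) - 1) := by
  obtain ⟨B, hAB, hB, hcard⟩ :=
    exists_isSparse_superset_card_le π.symm d hd ((headSet π).image π)
  have hBimage : (B.image π.symm).image π = B := by
    simp [image_image, Function.comp_def]
  refine ⟨B.image π.symm, fun i hi => ?_, by rw [hBimage]; exact hB, ?_⟩
  · simpa using mem_image_of_mem π.symm (hAB (mem_image_of_mem π hi))
  · have hd' : (2 : ℚ) ≤ d := by exact_mod_cast hd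
    rw [card_image_of_injective _ π.injective] at hcard
    rw [card_image_of_injective _ π.symm.injective, le_div_iff₀ (by linarith),
      ← Nat.cast_pred (by omega)]
    exact_mod_cast (mul_comm _ _).trans_le hcard

theorem stmt0 {n : ℕ} (hn : 0 < n) (d : ℕ) (hd : 2 ≤ d) (π : Equiv.Perm (Fin n)) :
    ∃ P' : Finset (Fin n),
      headSet π ⊆ P' ∧
      (∀ q q' : Fin n, q ∈ P'.image π → q' ∈ P'.image π → q < q' →
        (∀ x ∈ P'.image π, ¬(q < x ∧ x < q')) →
        (P'.filter (fun x => q ≤ x ∧ x < q')).card < 2 * d) ∧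
      (P'.card : ℚ) ≤ (d * (headSet π).card : ℚ) / ((d : ℚ) - 1) :=
  stmt0_general d hd π
end

section
/- For a string T of length n ending in a unique smallest terminator character, if BWT[i] = BWT[i+1] then LF(i+1) = LF(i) + 1. -/
/-- Lexicographic strict comparison of two length-n strings. -/
def lexLt {n : ℕ} {α : Type*} [LinearOrder α] (a b : Fin n → α) : Prop :=
  ∃ k : Fin n, (∀ j : Fin n, j < k → a j = b j) ∧ a k < b k

/-- The cyclic rotation of T starting at position k. -/
def rot {n : ℕ} {α : Type*} (T : Fin n → α) (k : Fin n) : Fin n → α :=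
  fun j => T (k + j)

lemma lexLt_irrefl {n : ℕ} {α : Type*} [LinearOrder α] (a : Fin n → α) :
    ¬ lexLt a a := by
  rintro ⟨k, _, hk⟩; exact lt_irrefl _ hk

lemma lexLt_asymm {n : ℕ} {α : Type*} [LinearOrder α] {a b : Fin n → α}
    (h1 : lexLt a b) (h2 : lexLt b a) : False := by
  obtain ⟨k1, hag1, hlt1⟩ := h1
  obtain ⟨k2, hag2, hlt2⟩ := h2
  rcases lt_trichotomy k1 k2 with h | h | h
  · exact absurd (hag2 k1 h).symm (ne_of_lt hlt1)
  · subst h; exact absurd (lt_trans hlt1 hlt2) (lt_irrefl _)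
  · exact absurd (hag1 k2 h).symm (ne_of_lt hlt2)

lemma fin_add_one_val {n : ℕ} [NeZero n] (k : Fin n) (h : k.val + 1 < n) :
    k + 1 = ⟨k.val + 1, h⟩ := by
  apply Fin.ext
  rw [Fin.add_def]
  have hone : (1 : Fin n).val = 1 := by
    simp [Fin.val_one', Nat.mod_eq_of_lt (by omega : 1 < n)]
  simp [hone, Nat.mod_eq_of_lt h]

lemma fin_val_pos {n : ℕ} [NeZero n] {k : Fin n} (h : k ≠ 0) : 1 ≤ k.val := by
  have : k.val ≠ 0 := fun hv => h (Fin.ext (by simp [hv]))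
  omega

/-- first character comparison -/
lemma lexLt_first_le {n : ℕ} [NeZero n] {α : Type*} [LinearOrder α]
    {a b : Fin n → α} (h : lexLt a b) : a 0 ≤ b 0 := by
  obtain ⟨k, hag, hlt⟩ := h
  rcases eq_or_ne k 0 with rfl | hk
  · exact le_of_lt hlt
  · refine le_of_eq (hag 0 ?_)
    have := fin_val_pos hk
    simp only [Fin.lt_def, Fin.val_zero]
    omega

/-- shifting right: if first chars equal and tails ordered, the full rotations
are ordered (needs unique minimal terminator to rule out equality on all but
the last position). -/
lemma key1 {n : ℕ} [NeZero n] {α : Type*} [LinearOrder α]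
    (T : Fin n → α) (term : Fin n)
    (hterm : term = ⟨n - 1, Nat.sub_lt (NeZero.pos n) Nat.one_pos⟩)
    (hsmall : ∀ j : Fin n, j ≠ term → T term < T j)
    {p q : Fin n} (hpq : p ≠ q) (hT : T p = T q)
    (h : lexLt (rot T (p + 1)) (rot T (q + 1))) :
    lexLt (rot T p) (rot T q) := by
  obtain ⟨k, hag, hlt⟩ := h
  by_cases hk : k.val + 1 < n
  · -- shift the witness by one
    refine ⟨⟨k.val + 1, hk⟩, ?_, ?_⟩
    · intro j hj
      rcases eq_or_ne j 0 with rfl | hj0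
      · simpa [rot] using hT
      · have hj1 : 1 ≤ j.val := fin_val_pos hj0
        set j' : Fin n := ⟨j.val - 1, by omega⟩ with hj'
        have hjj : j = j' + 1 := by
          rw [fin_add_one_val j' (by simp [hj']; omega)]
          exact Fin.ext (by simp [hj']; omega)
        have hj'k : j' < k := by
          have : j.val < k.val + 1 := hj
          simp only [Fin.lt_def, hj']
          omega
        have e1 : rot T p j = rot T (p + 1) j' := by
          rw [hjj]; simp only [rot]; congr 1; abel
        have e2 : rot T q j = rot T (q + 1) j' := by
          rw [hjj]; simp only [rot]; congr 1; abel
        rw [e1, e2, hag j' hj'k]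
    · have hke : (⟨k.val + 1, hk⟩ : Fin n) = k + 1 := (fin_add_one_val k hk).symm
      have e1 : rot T p ⟨k.val + 1, hk⟩ = rot T (p + 1) k := by
        rw [hke]; simp only [rot]; congr 1; abel
      have e2 : rot T q ⟨k.val + 1, hk⟩ = rot T (q + 1) k := by
        rw [hke]; simp only [rot]; congr 1; abel
      rw [e1, e2]; exact hlt
  · -- impossible: the rotations would agree everywhere except the last slot
    exfalso
    have hkval : k.val = n - 1 := by have := k.isLt; omega
    set a : Fin n := term - (p + 1) with ha
    set b : Fin n := term - (q + 1) with hb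
    have hab : a ≠ b := by
      intro hE
      apply hpq
      have h2 : term - a = term - b := by rw [hE]
      simp only [ha, hb, sub_sub_cancel] at h2
      exact add_right_cancel h2
    have hpa : p + 1 + a = term := by simp [ha]
    have hqb : q + 1 + b = term := by simp [hb]
    rcases lt_or_ge a.val (n - 1) with hav | hav
    · have hak : a < k := by simp [Fin.lt_def, hkval]; omega
      have hE := hag a hak
      simp only [rot] at hE
      rw [hpa] at hE
      have hneq : q + 1 + a ≠ term := by
        intro hE2
        exact (hab (add_left_cancel (a := q + 1) (by rw [hE2, hqb]))).elim
      exact absurd hE (ne_of_lt (hsmall _ hneq))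
    · have hbv : b.val < n - 1 := by
        have := a.isLt; have := b.isLt
        rcases eq_or_ne b.val (n - 1) with hE | hE
        · exact absurd (Fin.ext (hE ▸ (by omega : a.val = n - 1)) : a = b) hab
        · omega
      have hbk : b < k := by simp [Fin.lt_def, hkval]; omega
      have hE := hag b hbk
      simp only [rot] at hE
      rw [hqb] at hE
      have hneq : p + 1 + b ≠ term := by
        intro hE2
        exact (hab (add_left_cancel (a := p + 1) (by rw [hE2, hpa])).symm).elim
      exact absurd hE.symm (ne_of_lt (hsmall _ hneq))

/-- shifting left: if first chars equal and rotations ordered, tails ordered. -/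
lemma key2 {n : ℕ} [NeZero n] {α : Type*} [LinearOrder α]
    (T : Fin n → α) {p q : Fin n} (hT : T p = T q)
    (h : lexLt (rot T p) (rot T q)) :
    lexLt (rot T (p + 1)) (rot T (q + 1)) := by
  obtain ⟨k, hag, hlt⟩ := h
  have hk0 : k ≠ 0 := by
    rintro rfl
    simp only [rot, add_zero] at hlt
    exact absurd hT (ne_of_lt hlt)
  have hk1 : 1 ≤ k.val := fin_val_pos hk0
  have hkn := k.isLt
  refine ⟨⟨k.val - 1, by omega⟩, ?_, ?_⟩
  · intro j hj
    have hjv : j.val < k.val - 1 := hj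
    have hj1 : j.val + 1 < n := by omega
    have hje : j + 1 = (⟨j.val + 1, hj1⟩ : Fin n) := fin_add_one_val j hj1
    have hjk : (⟨j.val + 1, hj1⟩ : Fin n) < k := by simp [Fin.lt_def]; omega
    have e1 : rot T (p + 1) j = rot T p (j + 1) := by
      simp only [rot]; congr 1; abel
    have e2 : rot T (q + 1) j = rot T q (j + 1) := by
      simp only [rot]; congr 1; abel
    rw [e1, e2, hje, hag _ hjk]
  · have hke : (⟨k.val - 1, by omega⟩ : Fin n) + 1 = k := by
      rw [fin_add_one_val _ (by simp; omega)]
      exact Fin.ext (by simp; omega)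
    have e1 : rot T (p + 1) ⟨k.val - 1, by omega⟩ = rot T p k := by
      conv_rhs => rw [← hke]
      simp only [rot]; congr 1; abel
    have e2 : rot T (q + 1) ⟨k.val - 1, by omega⟩ = rot T q k := by
      conv_rhs => rw [← hke]
      simp only [rot]; congr 1; abel
    rw [e1, e2]; exact hlt

/-- If BWT[i] = BWT[i+1] then LF(i+1) = LF(i) + 1. -/
theorem stmt3 {n : ℕ} [NeZero n] {α : Type*} [LinearOrder α]
    (T : Fin n → α)
    (term : Fin n) (hterm : term = ⟨n - 1, by have := NeZero.pos n; omega⟩)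
    (hsmall : ∀ j : Fin n, j ≠ term → T term < T j)
    (SA : Equiv.Perm (Fin n))
    (hSA : ∀ i j : Fin n, i < j → lexLt (rot T (SA i)) (rot T (SA j)))
    (BWT : Fin n → α) (hBWT : ∀ i : Fin n, BWT i = T (SA i - 1))
    (LF : Fin n → Fin n) (hLF : ∀ i : Fin n, SA (LF i) = SA i - 1)
    (i : Fin n) (hi : i.val + 1 < n)
    (heq : BWT i = BWT ⟨i.val + 1, hi⟩) :
    (LF ⟨i.val + 1, hi⟩).val = (LF i).val + 1 := by
  set i1 : Fin n := ⟨i.val + 1, hi⟩ with hi1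
  have order : ∀ a b : Fin n, lexLt (rot T (SA a)) (rot T (SA b)) → a < b := by
    intro a b h
    rcases lt_trichotomy a b with hab | hab | hab
    · exact hab
    · subst hab; exact absurd h (lexLt_irrefl _)
    · exact absurd h (fun h => lexLt_asymm h (hSA b a hab))
  have hii1 : i < i1 := by simp [Fin.lt_def, hi1]
  have hc : T (SA i - 1) = T (SA i1 - 1) := by
    rw [← hBWT, ← hBWT]; exact heq
  have hSAne : SA i ≠ SA i1 := fun h => (ne_of_lt hii1) (SA.injective h)
  have hsub1 : ∀ x : Fin n, x - 1 + 1 = x := fun x => sub_add_cancel x 1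
  -- Step 1: LF i < LF i1
  have step1 : LF i < LF i1 := by
    apply order
    rw [hLF, hLF]
    apply key1 T term hterm hsmall
    · intro h
      apply hSAne
      rw [← hsub1 (SA i), ← hsub1 (SA i1), h]
    · exact hc
    · rw [hsub1, hsub1]; exact hSA i i1 hii1
  -- Step 2: nothing strictly between
  have step2 : ∀ k : Fin n, LF i < k → k < LF i1 → False := by
    intro k h1 h2
    have hlex1 : lexLt (rot T (SA (LF i))) (rot T (SA k)) := hSA _ _ h1
    have hlex2 : lexLt (rot T (SA k)) (rot T (SA (LF i1))) := hSA _ _ h2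
    have hfst : ∀ p : Fin n, rot T p 0 = T p := by intro p; simp [rot]
    have hTk : T (SA k) = T (SA i - 1) := by
      have le1 : T (SA i - 1) ≤ T (SA k) := by
        have := lexLt_first_le hlex1
        rwa [hfst, hfst, hLF] at this
      have le2 : T (SA k) ≤ T (SA i1 - 1) := by
        have := lexLt_first_le hlex2
        rwa [hfst, hfst, hLF] at this
      exact le_antisymm (hc ▸ le2) le1
    set m : Fin n := SA.symm (SA k + 1) with hm
    have hSAm : SA m = SA k + 1 := SA.apply_symm_apply _
    have him : i < m := by
      apply order
      have := key2 T (p := SA (LF i)) (q := SA k) (by rw [hLF]; exact hTk.symm) hlex1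
      rwa [hLF, hsub1, ← hSAm] at this
    have hmi1 : m < i1 := by
      apply order
      have := key2 T (p := SA k) (q := SA (LF i1)) (by rw [hLF, ← hc]; exact hTk) hlex2
      rwa [hLF, hsub1, ← hSAm] at this
    have hv1 : i.val < m.val := him
    have hv2 : m.val < i.val + 1 := hmi1
    omega
  -- Step 3: conclude
  have h1 : (LF i).val < (LF i1).val := step1
  by_contra hne
  have hgt : (LF i).val + 1 < (LF i1).val := by omega
  have hk : (LF i).val + 1 < n := lt_trans hgt (LF i1).isLt
  exact step2 ⟨(LF i).val + 1, hk⟩ (by simp [Fin.lt_def]) (by simp [Fin.lt_def]; omega)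
end

section
/- The LF-mapping is a permutation of {0,…,n−1} whose sequence LF(0),…,LF(n−1) consists of at most r unbroken incrementing subsequences, where r is the number of maximal runs of equal characters in the BWT. That is, |{i : i = 0 ∨ LF(i) ≠ LF(i−1)+1}| ≤ r. -/
/-- C(c) = number of positions j with BWT[j] < c. -/
def Ccount {n : ℕ} {α : Type*} [LinearOrder α] (B : Fin n → α) (c : α) : ℕ :=
  (Finset.univ.filter (fun j => B j < c)).card

/-- rank_c(B, i) = number of positions j < i with B[j] = c. -/
def rank {n : ℕ} {α : Type*} [LinearOrder α] (B : Fin n → α) (c : α) (i : Fin n) : ℕ :=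
  (Finset.univ.filter (fun j => j < i ∧ B j = c)).card

/-- LF(i) = C(BWT[i]) + rank_{BWT[i]}(BWT, i). -/
def LF {n : ℕ} {α : Type*} [LinearOrder α] (B : Fin n → α) (i : Fin n) : ℕ :=
  Ccount B (B i) + rank B (B i) i

/-- Run heads: positions i with i = 0 or B[i] ≠ B[i−1]. -/
def runHeads {n : ℕ} {α : Type*} [LinearOrder α] (B : Fin n → α) : Finset (Fin n) :=
  Finset.univ.filter (fun i => i.val = 0 ∨ B i ≠ B (finPred i))

open Finset

section CardLt

variable {ι β : Type*} [Fintype ι] [LinearOrder β] (f : ι → β)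

theorem card_filter_lt_lt_card_filter_lt {i j : ι} (h : f i < f j) :
    #{k | f k < f i} < #{k | f k < f j} := by
  refine card_lt_card ((ssubset_iff_of_subset ?_).2 ⟨i, ?_, ?_⟩)
  · intro k hk
    simp only [mem_filter, mem_univ, true_and] at hk ⊢
    exact hk.trans h
  · simpa using h
  · simp

theorem card_filter_lt_lt_card (i : ι) : #{k | f k < f i} < Fintype.card ι :=
  card_lt_univ_of_notMem (x := i) (by simp)

theorem card_filter_lt_injective (hf : Function.Injective f) :
    Function.Injective fun i => #{k | f k < f i} := by
  intro i j hij
  rcases lt_trichotomy (f i) (f j) with h | h | h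
  · exact absurd hij (card_filter_lt_lt_card_filter_lt f h).ne
  · exact hf h
  · exact absurd hij (card_filter_lt_lt_card_filter_lt f h).ne'

end CardLt

section LF

variable {n : ℕ} {α : Type*} (B : Fin n → α)

def lfKey (i : Fin n) : α ×ₗ Fin n := toLex (B i, i)

theorem lfKey_injective : Function.Injective (lfKey B) :=
  fun _ _ h => congrArg Prod.snd (toLex.injective h)

variable [LinearOrder α]

theorem LF_eq_card_lfKey_lt (i : Fin n) : LF B i = #{j | lfKey B j < lfKey B i} := by
  rw [LF, Ccount, rank, ← card_union_of_disjoint]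
  · congr 1
    ext j
    simp only [lfKey, Prod.Lex.toLex_lt_toLex, mem_union, mem_filter, mem_univ, true_and]
    tauto
  · exact disjoint_filter.2 fun j _ hlt hrank => hlt.ne hrank.2

theorem LF_lt (i : Fin n) : LF B i < n := by
  simpa [LF_eq_card_lfKey_lt] using card_filter_lt_lt_card (lfKey B) i

theorem LF_injective : Function.Injective (LF B) := by
  simpa only [funext (LF_eq_card_lfKey_lt B)] using
    card_filter_lt_injective _ (lfKey_injective B)

theorem existsUnique_LF_eq {m : ℕ} (hm : m < n) : ∃! i, LF B i = m := by
  let toFin : Fin n → Fin n := fun i => ⟨LF B i, LF_lt B i⟩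
  have hinj : Function.Injective toFin := fun i j h => LF_injective B (congrArg Fin.val h)
  obtain ⟨i, hi⟩ := Finite.surjective_of_injective hinj ⟨m, hm⟩
  exact ⟨i, congrArg Fin.val hi, fun j hj => LF_injective B (hj.trans (congrArg Fin.val hi).symm)⟩

theorem lt_iff_le_finPred {i j : Fin n} (hi : i.val ≠ 0) : j < i ↔ j ≤ finPred i := by
  simp only [Fin.lt_def, Fin.le_def, finPred]
  omega

theorem rank_eq_rank_finPred_add_one {i : Fin n} (hi : i.val ≠ 0) :
    rank B (B (finPred i)) i = rank B (B (finPred i)) (finPred i) + 1 := by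
  rw [rank, rank, ← card_insert_of_notMem (s := {j | j < finPred i ∧ _}) (a := finPred i)
    (by simp)]
  congr 1
  ext j
  simp only [lt_iff_le_finPred hi, le_iff_lt_or_eq, mem_insert, mem_filter, mem_univ, true_and]
  constructor
  · rintro ⟨hj | rfl, hB⟩
    · exact Or.inr ⟨hj, hB⟩
    · exact Or.inl rfl
  · rintro (rfl | ⟨hj, hB⟩)
    · exact ⟨Or.inr rfl, rfl⟩
    · exact ⟨Or.inl hj, hB⟩

theorem LF_eq_LF_finPred_add_one {i : Fin n} (hi : i.val ≠ 0) (hB : B i = B (finPred i)) :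
    LF B i = LF B (finPred i) + 1 := by
  rw [LF, LF, hB, rank_eq_rank_finPred_add_one B hi, add_assoc]

theorem filter_LF_ne_succ_subset_runHeads :
    univ.filter (fun i => i.val = 0 ∨ LF B i ≠ LF B (finPred i) + 1) ⊆ runHeads B := by
  intro i
  simp only [runHeads, mem_filter, mem_univ, true_and]
  rintro (hi | hLF)
  · exact Or.inl hi
  · exact or_iff_not_imp_left.2 fun hi hB => hLF (LF_eq_LF_finPred_add_one B hi hB)

end LF

theorem stmt4_general {n : ℕ} {α : Type*} [LinearOrder α]
    (B : Fin n → α) (r : ℕ) (hr : r = (runHeads B).card) :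
    (∀ i : Fin n, LF B i < n) ∧ (∀ m : ℕ, m < n → ∃! i : Fin n, LF B i = m) ∧
    (Finset.univ.filter
      (fun i : Fin n => i.val = 0 ∨ LF B i ≠ LF B (finPred i) + 1)).card ≤ r :=
  ⟨LF_lt B, fun _ => existsUnique_LF_eq B,
    hr ▸ card_le_card (filter_LF_ne_succ_subset_runHeads B)⟩

/-- LF is a bijection of {0,…,n−1} and its sequence of values consists of at most r
unbroken incrementing subsequences, where r is the number of runs in the BWT. -/
theorem stmt4 {n : ℕ} (hn : 1 ≤ n) {α : Type*} [LinearOrder α]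
    (B : Fin n → α) (r : ℕ) (hr : r = (runHeads B).card) :
    (∀ i : Fin n, LF B i < n) ∧ (∀ m : ℕ, m < n → ∃! i : Fin n, LF B i = m) ∧
    (Finset.univ.filter
      (fun i : Fin n => i.val = 0 ∨ LF B i ≠ LF B (finPred i) + 1)).card ≤ r :=
  stmt4_general B r hr
end

section
/- Suppose BWT[0..n−1] = (bc)^{n/10} · a^{4n/5} for n divisible by 10, over alphabet {a,b,c} with a < b < c. Then the BWT has exactly n/5 + 1 runs, and for every position i in the run of a's with offset d = i − n/5 > n/5, computing LF(i) by sequential scan from the table row of LF(n/5) requires scanning across all n/5 runs of b's and c's, i.e., at least 3n/5 of the n positions require scanning r − 1 = n/5 rows; hence the average scan length over all positions is Ω(r). -/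
open Finset

theorem Fin.card_filter_val_le (n t : ℕ) : #{i : Fin n | i.val ≤ t} = min n (t + 1) := by
  simp only [Nat.le_iff_lt_add_one]
  exact Fin.card_filter_val_lt

theorem Fin.card_filter_le_val (n q : ℕ) : #{i : Fin n | q ≤ i.val} = n - q := by
  have h := card_filter_add_card_filter_not (s := (univ : Finset (Fin n))) (fun i => i.val < q)
  simp only [not_lt, Fin.card_filter_val_lt, card_univ, Fintype.card_fin] at h
  omega

section SuffixRun

variable {n : ℕ} {α : Type*} [LinearOrder α] {B : Fin n → α} {a : α} {p : ℕ}

theorem Ccount_eq_zero_of_forall_le (hmin : ∀ j, a ≤ B j) : Ccount B a = 0 := by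
  simp [Ccount, hmin]

theorem rank_eq_sub_of_apply_eq_iff (hsuf : ∀ j : Fin n, B j = a ↔ p ≤ j.val)
    (i : Fin n) (hi : p ≤ i.val) : rank B a i = i.val - p := by
  have hset : univ.filter (fun j => j < i ∧ B j = a) =
      univ.filter (fun j : Fin n => p ≤ j.val) \ univ.filter (fun j : Fin n => i.val ≤ j.val) := by
    ext j
    simp only [mem_filter, mem_sdiff, mem_univ, true_and, hsuf, Fin.lt_def, not_le]
    tauto
  rw [rank, hset, card_sdiff_of_subset, Fin.card_filter_le_val, Fin.card_filter_le_val]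
  · omega
  · intro j
    simp only [mem_filter, mem_univ, true_and]
    omega

theorem LF_eq_sub_of_apply_eq_iff (hmin : ∀ j, a ≤ B j) (hsuf : ∀ j : Fin n, B j = a ↔ p ≤ j.val)
    (i : Fin n) (hi : p ≤ i.val) : LF B i = i.val - p := by
  rw [LF, (hsuf i).2 hi, Ccount_eq_zero_of_forall_le hmin, rank_eq_sub_of_apply_eq_iff hsuf i hi,
    zero_add]

theorem runHeads_eq_filter_val_le (hsuf : ∀ j : Fin n, B j = a ↔ p ≤ j.val)
    (hunit : ∀ i : Fin n, 0 < i.val → i.val < p → B i ≠ B (finPred i)) :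
    runHeads B = ({i | (i : ℕ) ≤ p} : Finset (Fin n)) := by
  ext i
  have hpred : (finPred i).val = i.val - 1 := rfl
  simp only [runHeads, mem_filter_univ]
  rcases Nat.eq_zero_or_pos i.val with h0 | hpos
  · simp [h0]
  rcases lt_trichotomy i.val p with hlt | rfl | hgt
  · simp [hunit i hpos hlt, hlt.le]
  · have hpred_ne : B (finPred i) ≠ a := by rw [Ne, hsuf]; omega
    simp [(hsuf i).2 le_rfl, hpred_ne.symm]
  · simp [hpos.ne', (hsuf i).2 hgt.le, (hsuf (finPred i)).2 (by omega), hgt.not_ge]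

end SuffixRun

section AlternatingPrefix

variable {n : ℕ} {α : Type*} {B : Fin n → α} {a b c : α} {k : ℕ} (hk : 2 * k ≤ n)
  (hpairs : ∀ j : ℕ, ∀ hj : j < k, B ⟨2 * j, by omega⟩ = b ∧ B ⟨2 * j + 1, by omega⟩ = c)
  (hrest : ∀ i : Fin n, 2 * k ≤ i.val → B i = a)

include hpairs in
theorem apply_eq_ite_even (i : Fin n) (hi : i.val < 2 * k) :
    B i = if Even i.val then b else c := by
  rcases Nat.even_or_odd' i.val with ⟨j, hj | hj⟩
  · have hi' : i = ⟨2 * j, by omega⟩ := Fin.ext hj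
    simp [hi', (hpairs j (by omega)).1]
  · have hi' : i = ⟨2 * j + 1, by omega⟩ := Fin.ext hj
    simp [hi', (hpairs j (by omega)).2]

variable [LinearOrder α]

include hpairs hrest

theorem le_apply_of_alternating (hab : a < b) (hbc : b < c) (j : Fin n) : a ≤ B j := by
  rcases lt_or_ge j.val (2 * k) with h | h
  · rw [apply_eq_ite_even hk hpairs j h]
    split_ifs
    exacts [hab.le, (hab.trans hbc).le]
  · exact (hrest j h).ge

theorem apply_eq_iff_of_alternating (hab : a < b) (hbc : b < c) (j : Fin n) :
    B j = a ↔ 2 * k ≤ j.val := by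
  refine ⟨fun hja => ?_, hrest j⟩
  by_contra! h
  rw [apply_eq_ite_even hk hpairs j h] at hja
  split_ifs at hja
  exacts [hab.ne' hja, (hab.trans hbc).ne' hja]

omit hrest in
theorem apply_ne_apply_finPred_of_alternating (hbc : b < c) (i : Fin n) (hpos : 0 < i.val)
    (hi : i.val < 2 * k) : B i ≠ B (finPred i) := by
  have hpred : (finPred i).val = i.val - 1 := rfl
  rw [apply_eq_ite_even hk hpairs i hi, apply_eq_ite_even hk hpairs (finPred i) (by omega), hpred]
  have hparity : Even (i.val - 1) ↔ ¬Even i.val := by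
    simp [Nat.even_sub' hpos]
  by_cases heven : Even i.val <;> simp [heven, hparity, hbc.ne, hbc.ne']

end AlternatingPrefix

/-- For BWT = (bc)^{n/10} · a^{4n/5} (10 ∣ n): the BWT has exactly r = n/5 + 1 runs,
LF(n/5 + t) = t for 0 ≤ t < 4n/5 (so the destinations of the run of a's interleave all
the unit runs of b's and c's), and the number of run heads with position ≤ t is
min(t, n/5) + 1 — in particular it equals r = n/5 + 1 as soon as t ≥ n/5, so a
sequential scan for an LF step with destination t ≥ n/5 crosses all r − 1 = n/5 unit
runs of b's and c's; since 3n/5 of the n positions in the run of a's have such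
destinations, the average scan length over all positions is Ω(r). -/
theorem stmt9 {α : Type*} [LinearOrder α] (a b c : α) (hab : a < b) (hbc : b < c)
    (n : ℕ) (hdvd : 10 ∣ n) (hn : 0 < n) (B : Fin n → α)
    (hB1 : ∀ j : ℕ, ∀ hj : j < n / 10,
      B ⟨2 * j, by omega⟩ = b ∧ B ⟨2 * j + 1, by omega⟩ = c)
    (hB2 : ∀ i : Fin n, n / 5 ≤ i.val → B i = a) :
    (runHeads B).card = n / 5 + 1 ∧
    (∀ t : ℕ, ∀ ht : n / 5 + t < n, LF B ⟨n / 5 + t, ht⟩ = t) ∧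
    (∀ t : ℕ, t < n →
      ((runHeads B).filter (fun x => x.val ≤ t)).card = min t (n / 5) + 1) ∧
    n / 5 * 3 ≤ (Finset.univ.filter (fun i : Fin n =>
      n / 5 ≤ i.val ∧ n / 5 ≤ LF B i)).card := by
  have hk : 2 * (n / 10) = n / 5 := by omega
  have hrest : ∀ i : Fin n, 2 * (n / 10) ≤ i.val → B i = a := fun i hi => hB2 i (hk ▸ hi)
  have hmin := le_apply_of_alternating (by omega) hB1 hrest hab hbc
  have hsuf : ∀ j : Fin n, B j = a ↔ n / 5 ≤ j.val :=
    hk ▸ apply_eq_iff_of_alternating (by omega) hB1 hrest hab hbc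
  have hunit : ∀ i : Fin n, 0 < i.val → i.val < n / 5 → B i ≠ B (finPred i) :=
    fun i hpos hi => apply_ne_apply_finPred_of_alternating (by omega) hB1 hbc i hpos (by omega)
  have hLF := LF_eq_sub_of_apply_eq_iff hmin hsuf
  have hheads := runHeads_eq_filter_val_le hsuf hunit
  refine ⟨?_, fun t ht => ?_, fun t ht => ?_, ?_⟩
  · rw [hheads, Fin.card_filter_val_le]
    omega
  · rw [hLF _ (Nat.le_add_right _ _), Nat.add_sub_cancel_left]
  · rw [hheads, filter_filter]
    simp only [← le_min_iff, Fin.card_filter_val_le]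
    omega
  · calc n / 5 * 3 = #{i : Fin n | 2 * (n / 5) ≤ i.val} := by
          rw [Fin.card_filter_le_val]
          omega
      _ ≤ _ := card_le_card fun i hi => by
          simp only [mem_filter_univ] at hi ⊢
          rw [hLF i (by omega)]
          omega
end

section
/- Let BWT have runs with head positions I[0] < I[1] < … < I[r−1] (I[0] = 0) and set I[r] = n. For a position j = I[k] + t with 0 ≤ t < I[k+1] − I[k] (so j is in run k), LF(j) = LF(I[k]) + t. -/
/-!
Between a run head `p` and the next run head every position carries the character `c = B p`,
so the `c`-rank grows by exactly one per step while `C(c)` stays fixed.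
-/

section Runs

variable {n : ℕ} {α : Type*} [LinearOrder α] (B : Fin n → α)

theorem finPred_val (i : Fin n) : (finPred i).val = i.val - 1 := rfl

theorem apply_finPred_of_not_mem_runHeads {i : Fin n} (hi : i ∉ runHeads B) :
    B (finPred i) = B i := by
  simp only [runHeads, Finset.mem_filter, Finset.mem_univ, true_and, not_or, not_ne_iff] at hi
  exact hi.2.symm

theorem apply_eq_of_forall_runHeads_le {j p : Fin n}
    (hmax : ∀ q ∈ runHeads B, q ≤ j → q ≤ p) {i : Fin n} (hpi : p ≤ i) (hij : i ≤ j) :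
    B i = B p := by
  obtain ⟨d, hd⟩ : ∃ d, i.val = p.val + d := ⟨i.val - p.val, by omega⟩
  induction d generalizing i with
  | zero => exact congrArg B (Fin.ext (by omega))
  | succ d ih =>
    have hpi' : p < i := Fin.lt_def.mpr (by omega)
    have hi : i ∉ runHeads B := fun hq => (hmax i hq hij).not_gt hpi'
    rw [← apply_finPred_of_not_mem_runHeads B hi]
    exact ih (Fin.le_def.mpr (by rw [finPred_val]; omega))
      (le_trans (Fin.le_def.mpr (by rw [finPred_val]; omega)) hij) (by rw [finPred_val]; omega)

theorem rank_eq_rank_add_of_forall_eq {c : α} {p j : Fin n} (hpj : p ≤ j)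
    (hc : ∀ k, p ≤ k → k < j → B k = c) :
    rank B c j = rank B c p + (j.val - p.val) := by
  have hsplit : Finset.univ.filter (fun k => k < j ∧ B k = c)
      = Finset.univ.filter (fun k => k < p ∧ B k = c) ∪ Finset.Ico p j := by
    ext k
    simp only [Finset.mem_filter, Finset.mem_univ, true_and, Finset.mem_union, Finset.mem_Ico]
    constructor
    · rintro ⟨hkj, hBk⟩
      exact (lt_or_ge k p).imp (⟨·, hBk⟩) (⟨·, hkj⟩)
    · rintro (⟨hkp, hBk⟩ | ⟨hpk, hkj⟩)
      · exact ⟨hkp.trans_le hpj, hBk⟩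
      · exact ⟨hkj, hc k hpk hkj⟩
  have hdisj : Disjoint (Finset.univ.filter (fun k => k < p ∧ B k = c)) (Finset.Ico p j) := by
    simp only [Finset.disjoint_left, Finset.mem_filter, Finset.mem_univ, true_and,
      Finset.mem_Ico, not_and]
    exact fun k hk hpk => absurd hk.1 (not_lt_of_ge hpk)
  rw [rank, hsplit, Finset.card_union_of_disjoint hdisj, Fin.card_Ico, rank]

end Runs

theorem stmt10_general {n : ℕ} {α : Type*} [LinearOrder α] (B : Fin n → α) (j p : Fin n)
    (hpj : p ≤ j)
    (hmax : ∀ q ∈ runHeads B, q ≤ j → q ≤ p) :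
    LF B j = LF B p + (j.val - p.val) := by
  have hrun : ∀ i, p ≤ i → i ≤ j → B i = B p := fun i =>
    apply_eq_of_forall_runHeads_le B hmax
  rw [LF, LF, hrun j hpj le_rfl,
    rank_eq_rank_add_of_forall_eq B hpj fun k hpk hkj => hrun k hpk hkj.le, add_assoc]

/-- If p is the run head of the run containing j (the largest run head ≤ j),
then LF(j) = LF(p) + (j − p). -/
theorem stmt10 {n : ℕ} {α : Type*} [LinearOrder α] (B : Fin n → α) (j p : Fin n)
    (hp : p ∈ runHeads B) (hpj : p ≤ j)
    (hmax : ∀ q ∈ runHeads B, q ≤ j → q ≤ p) :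
    LF B j = LF B p + (j.val - p.val) :=
  stmt10_general B j p hpj hmax
end

section
/- In a backward search step, let BWT[s..e] be a nonempty interval and c a character. If BWT[s..e] contains at least one occurrence of c, let s* = min{j ∈ [s,e] : BWT[j] = c} and e* = max{j ∈ [s,e] : BWT[j] = c}. Then {LF(j) : j ∈ [s,e], BWT[j] = c} = [LF(s*), LF(e*)], i.e., the LF-images of the c-positions in the interval form a contiguous interval. -/
/-! On the occurrences of `c`, `rank B c` is strictly increasing and takes values in
`[0, #occurrences of c)`, so by counting it hits every value there: consecutive occurrences have
consecutive ranks. Since `LF` on these occurrences is `rank` shifted by `C(c)`, every integer between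
`LF(s*)` and `LF(e*)` is the `LF`-image of an occurrence of `c` between `s*` and `e*`. -/

section Rank

variable {n : ℕ} {α : Type*} [LinearOrder α] (B : Fin n → α) (c : α)

theorem rank_mono : Monotone (rank B c) := fun _ _ h =>
  Finset.card_le_card fun j hj => by
    simp only [Finset.mem_filter, Finset.mem_univ, true_and] at hj ⊢
    exact ⟨hj.1.trans_le h, hj.2⟩

theorem rank_lt_rank {i i' : Fin n} (h : i < i') (hi : B i = c) :
    rank B c i < rank B c i' := by
  refine Finset.card_lt_card ⟨fun j hj => ?_, fun hsub => ?_⟩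
  · simp only [Finset.mem_filter, Finset.mem_univ, true_and] at hj ⊢
    exact ⟨hj.1.trans h, hj.2⟩
  · have hi' : i ∈ Finset.univ.filter fun j => j < i' ∧ B j = c := by simp [h, hi]
    simpa using hsub hi'

theorem rank_strictMonoOn : StrictMonoOn (rank B c) {j | B j = c} :=
  fun _ hi _ _ h => rank_lt_rank B c h hi

theorem rank_lt_card_filter_eq {i : Fin n} (hi : B i = c) :
    rank B c i < (Finset.univ.filter fun j => B j = c).card :=
  Finset.card_lt_card ⟨Finset.monotone_filter_right _ fun _ _ h => h.2,
    fun hsub => by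
      have hi' : i ∈ Finset.univ.filter fun j => B j = c := by simp [hi]
      simpa using hsub hi'⟩

theorem image_rank_filter_eq :
    (Finset.univ.filter fun j => B j = c).image (rank B c) =
      Finset.range (Finset.univ.filter fun j => B j = c).card := by
  refine Finset.eq_of_subset_of_card_le (fun k hk => ?_) ?_
  · obtain ⟨j, hj, rfl⟩ := Finset.mem_image.mp hk
    exact Finset.mem_range.mpr (rank_lt_card_filter_eq B c (Finset.mem_filter.mp hj).2)
  · rw [Finset.card_range, Finset.card_image_of_injOn]
    simpa using (rank_strictMonoOn B c).injOn

theorem exists_rank_eq_of_le {a b : Fin n} (hb : B b = c) {k : ℕ}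
    (hak : rank B c a ≤ k) (hkb : k ≤ rank B c b) :
    ∃ j, a ≤ j ∧ j ≤ b ∧ B j = c ∧ rank B c j = k := by
  have hk : k ∈ (Finset.univ.filter fun j => B j = c).image (rank B c) := by
    rw [image_rank_filter_eq]
    exact Finset.mem_range.mpr (hkb.trans_lt (rank_lt_card_filter_eq B c hb))
  obtain ⟨j, hj, rfl⟩ := Finset.mem_image.mp hk
  have hj : B j = c := (Finset.mem_filter.mp hj).2
  refine ⟨j, ?_, ?_, hj, rfl⟩
  · by_contra! hja
    exact (rank_lt_rank B c hja hj).not_ge hak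
  · by_contra! hbj
    exact (rank_lt_rank B c hbj hb).not_ge hkb

theorem LF_eq_Ccount_add_rank {i : Fin n} (hi : B i = c) : LF B i = Ccount B c + rank B c i := by
  rw [LF, hi]

end Rank

theorem stmt14_general {n : ℕ} {α : Type*} [LinearOrder α] (B : Fin n → α) (c : α)
    (s e sStar eStar : Fin n)
    (hs1 : s ≤ sStar ∧ sStar ≤ e ∧ B sStar = c)
    (hs2 : ∀ j : Fin n, s ≤ j → j ≤ e → B j = c → sStar ≤ j)
    (he1 : s ≤ eStar ∧ eStar ≤ e ∧ B eStar = c)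
    (he2 : ∀ j : Fin n, s ≤ j → j ≤ e → B j = c → j ≤ eStar) :
    ∀ m : ℕ, (∃ j : Fin n, s ≤ j ∧ j ≤ e ∧ B j = c ∧ LF B j = m) ↔
      (LF B sStar ≤ m ∧ m ≤ LF B eStar) := by
  obtain ⟨hs, -, hsc⟩ := hs1
  obtain ⟨-, he, hec⟩ := he1
  intro m
  rw [LF_eq_Ccount_add_rank B c hsc, LF_eq_Ccount_add_rank B c hec]
  constructor
  · rintro ⟨j, hsj, hje, hjc, rfl⟩
    rw [LF_eq_Ccount_add_rank B c hjc]
    exact ⟨Nat.add_le_add_left (rank_mono B c (hs2 j hsj hje hjc)) _,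
      Nat.add_le_add_left (rank_mono B c (he2 j hsj hje hjc)) _⟩
  · rintro ⟨h1, h2⟩
    obtain ⟨j, hsj, hje, hjc, hj⟩ :=
      exists_rank_eq_of_le B c (a := sStar) hec (k := m - Ccount B c) (by omega) (by omega)
    refine ⟨j, hs.trans hsj, hje.trans he, hjc, ?_⟩
    rw [LF_eq_Ccount_add_rank B c hjc]
    omega

/-- The LF-images of the c-positions inside a BWT interval [s,e] form the contiguous
interval [LF(s*), LF(e*)], where s* and e* are the first and last c-positions in [s,e]. -/
theorem stmt14 {n : ℕ} {α : Type*} [LinearOrder α] (B : Fin n → α) (c : α)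
    (s e sStar eStar : Fin n) (hse : s ≤ e)
    (hs1 : s ≤ sStar ∧ sStar ≤ e ∧ B sStar = c)
    (hs2 : ∀ j : Fin n, s ≤ j → j ≤ e → B j = c → sStar ≤ j)
    (he1 : s ≤ eStar ∧ eStar ≤ e ∧ B eStar = c)
    (he2 : ∀ j : Fin n, s ≤ j → j ≤ e → B j = c → j ≤ eStar) :
    ∀ m : ℕ, (∃ j : Fin n, s ≤ j ∧ j ≤ e ∧ B j = c ∧ LF B j = m) ↔
      (LF B sStar ≤ m ∧ m ≤ LF B eStar) :=
  stmt14_general B c s e sStar eStar hs1 hs2 he1 he2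
end
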